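/- arXiv:2203.14809 — 6 statements merged into one kernel-verified Lean document; each statement's English description precedes it below -/
import Mathlib

section
/- Let N be a k-bounded data Petri net with injective labelling ℓ and let B = DPNtoDDS(N). Then N satisfies property (P1) if and only if B has no blocked state. -/
/-! ## Basic framework: values, assignments, formulas -/

/-- Values: booleans, integers, or rationals. -/
abbrev Val : Type := Bool ⊕ ℤ ⊕ ℚ

/-- An assignment of values to the variables in `V`. -/
abbrev Assign (V : Type) : Type := V → Val

/-- A formula over variables `V`, represented semantically by its set of satisfying
assignments.  (Formulas are taken up to logical equivalence, which by `funext`/`propext`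
coincides with equality of this representation; by quantifier elimination for linear
arithmetic, existential quantification stays within the language.) -/
def Formula (V : Type) : Type := Assign V → Prop

/-- Satisfiability of a formula. -/
def Formula.Sat {V : Type} (φ : Formula V) : Prop := ∃ α, φ α

/-- `C_α` : the formula `⋀_{v ∈ V} v = α(v)`. -/
def Cof {V : Type} (α : Assign V) : Formula V := fun α' => ∀ v, α' v = α v

/-- A transition variable assignment: values for the annotated variables
`V^r ∪ V^w` (read copies and written copies of the variables). -/
structure TAssign (V : Type) where
  read : Assign V
  write : Assign V

/-- A constraint of linear arithmetic over the annotated variables `V^r ∪ V^w`,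
represented semantically, together with the sets `read`/`write` of variables whose
read resp. written copies occur in it (`sat_congr` expresses that the constraint
depends only on occurring annotated variables). -/
structure Guard (V : Type) where
  sat : TAssign V → Prop
  reads : Set V
  writes : Set V
  sat_congr : ∀ β β' : TAssign V,
    (∀ v ∈ reads, β.read v = β'.read v) →
    (∀ v ∈ writes, β.write v = β'.write v) → (sat β ↔ sat β')

/-! ## Data-aware dynamic systems (DDS) -/

/-- A data-aware dynamic system `⟨B, b_I, A, Δ, B_F, V, α_I, guard⟩`
with states drawn from `S`, actions from `A` and process variables `V`. -/
structure DDS (S A V : Type) where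
  states : Set S
  init : S
  trans : Set (S × A × S)
  finals : Set S
  alphaI : Assign V
  guard : A → Guard V

/-- A step `(b, α) →(a,β) (b', α')` of a DDS. -/
def DDS.Step {S A V : Type} (D : DDS S A V) (b : S) (α : Assign V) (a : A)
    (β : TAssign V) (b' : S) (α' : Assign V) : Prop :=
  (b, a, b') ∈ D.trans ∧
  (∀ v, β.read v = α v) ∧
  (∀ v ∈ (D.guard a).writes, α' v = β.write v) ∧
  (∀ v, v ∉ (D.guard a).writes → α' v = α v) ∧
  (D.guard a).sat β

/-- `(b, α) →* (b', α')`: a derivation (finite sequence of consecutive steps) exists. -/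
inductive DDS.Reach {S A V : Type} (D : DDS S A V) :
    S × Assign V → S × Assign V → Prop
  | refl (c : S × Assign V) : Reach D c c
  | step {c : S × Assign V} {b b' : S} {α α' : Assign V} {a : A} {β : TAssign V} :
      Reach D c (b, α) → D.Step b α a β b' α' → Reach D c (b', α')

/-- The DDS has a blocked state: a run reaches a configuration from which
no final state is reachable. -/
def DDS.HasBlockedState {S A V : Type} (D : DDS S A V) : Prop :=
  ∃ b α, D.Reach (D.init, D.alphaI) (b, α) ∧
    ¬ ∃ bf α', bf ∈ D.finals ∧ D.Reach (b, α) (bf, α')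

/-- A state `b` is reachable in the DDS. -/
def DDS.ReachableState {S A V : Type} (D : DDS S A V) (b : S) : Prop :=
  ∃ α, D.Reach (D.init, D.alphaI) (b, α)

/-- A transition `(b, a, b') ∈ Δ` is reachable: some run traverses it. -/
def DDS.ReachableTrans {S A V : Type} (D : DDS S A V) (b : S) (a : A) (b' : S) : Prop :=
  (b, a, b') ∈ D.trans ∧
  ∃ α β α', D.Reach (D.init, D.alphaI) (b, α) ∧ D.Step b α a β b' α'

/-- Derivations recording their abstraction: `DDS.Deriv D b α σ b' α'` means there is a
derivation `(b, α) →* (b', α')` whose abstraction (symbolic derivation) is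
`b →a₁ b₁ →a₂ ⋯ →aₙ bₙ`, recorded as the trace `σ = [(a₁,b₁),…,(aₙ,bₙ)]`. -/
inductive DDS.Deriv {S A V : Type} (D : DDS S A V) :
    S → Assign V → List (A × S) → S → Assign V → Prop
  | refl (b : S) (α : Assign V) : Deriv D b α [] b α
  | step {b : S} {α : Assign V} {σ : List (A × S)} {b' : S} {α' : Assign V}
      {a : A} {β : TAssign V} {b'' : S} {α'' : Assign V} :
      Deriv D b α σ b' α' → D.Step b' α' a β b'' α'' →
      Deriv D b α (σ ++ [(a, b'')]) b'' α''

/-- Symbolic derivations: `DDS.SymDeriv D b σ b'` means `b →a₁ b₁ ⋯ →aₙ bₙ = b'`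
is a symbolic derivation (only states and actions, i.e. the trace `σ`). -/
inductive DDS.SymDeriv {S A V : Type} (D : DDS S A V) : S → List (A × S) → S → Prop
  | refl (b : S) : SymDeriv D b [] b
  | step {b : S} {σ : List (A × S)} {b' : S} {a : A} {b'' : S} :
      SymDeriv D b σ b' → (b', a, b'') ∈ D.trans → SymDeriv D b (σ ++ [(a, b'')]) b''

/-! ## Constraint graphs -/

/-- `update(φ, a)`: the formula (it exists by quantifier elimination) that is logically
equivalent to `∃U. φ[U/V] ∧ Δ_a[U/V^r, V/V^w]`, where `Δ_a` is the transition formula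
`guard(a) ∧ ⋀_{v ∉ write(a)} v^w = v^r`. -/
def DDS.update {S A V : Type} (D : DDS S A V) (φ : Formula V) (a : A) : Formula V :=
  fun α' => ∃ u : Assign V, φ u ∧ (D.guard a).sat ⟨u, α'⟩ ∧
    ∀ v, v ∉ (D.guard a).writes → α' v = u v

/-- Nodes of the constraint graph `CG(b₀, φ₀)` (with initial node `(b₀, φ₀)`);
for `CG(b₀, α)` take `φ₀ = C_α`.  Formulas are taken up to logical equivalence,
which in the semantic representation is equality. -/
inductive DDS.CGNode {S A V : Type} (D : DDS S A V) (b0 : S) (φ0 : Formula V) :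
    S → Formula V → Prop
  | init : CGNode D b0 φ0 b0 φ0
  | step {b : S} {φ : Formula V} {a : A} {b' : S} :
      CGNode D b0 φ0 b φ → (b, a, b') ∈ D.trans → Formula.Sat (D.update φ a) →
      CGNode D b0 φ0 b' (D.update φ a)

/-- Edges `(b, φ) →a (b', φ')` of the constraint graph with initial node `(b₀, φ₀)`. -/
def DDS.CGEdge {S A V : Type} (D : DDS S A V) (b0 : S) (φ0 : Formula V)
    (b : S) (φ : Formula V) (a : A) (b' : S) (φ' : Formula V) : Prop :=
  D.CGNode b0 φ0 b φ ∧ (b, a, b') ∈ D.trans ∧ Formula.Sat (D.update φ a) ∧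
    φ' = D.update φ a

/-- Paths in the constraint graph with initial node `(b₀, φ₀)`, from the initial node to a
node `(b, φ)`, recording the symbolic derivation `σ(π)` as the trace `σ : List (A × S)`. -/
inductive DDS.CGPath {S A V : Type} (D : DDS S A V) (b0 : S) (φ0 : Formula V) :
    S → Formula V → List (A × S) → Prop
  | refl : CGPath D b0 φ0 b0 φ0 []
  | step {b : S} {φ : Formula V} {σ : List (A × S)} {a : A} {b' : S} :
      CGPath D b0 φ0 b φ σ → (b, a, b') ∈ D.trans → Formula.Sat (D.update φ a) →
      CGPath D b0 φ0 b' (D.update φ a) (σ ++ [(a, b')])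

/-! ## The constraint graph `CG(b)` with placeholder variables `V₀` -/

/-- Lift a guard over `V` to one over `V ⊕ V`, where `Sum.inl v` is the variable `v ∈ V`
and `Sum.inr v` is the placeholder variable `v₀ ∈ V₀` (which is never read nor written). -/
def Guard.lift {V : Type} (g : Guard V) : Guard (V ⊕ V) where
  sat β := g.sat ⟨fun v => β.read (Sum.inl v), fun v => β.write (Sum.inl v)⟩
  reads := Sum.inl '' g.reads
  writes := Sum.inl '' g.writes
  sat_congr := by
    intro β β' hr hw
    apply g.sat_congr
    · intro v hv; exact hr _ ⟨v, hv, rfl⟩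
    · intro v hv; exact hw _ ⟨v, hv, rfl⟩

/-- Lift a DDS over variables `V` to one over `V ⊕ V`, where the second copy plays the
role of the fresh placeholder variables `V₀` (same states and transitions). -/
def DDS.lift {S A V : Type} (D : DDS S A V) : DDS S A (V ⊕ V) where
  states := D.states
  init := D.init
  trans := D.trans
  finals := D.finals
  alphaI := Sum.elim D.alphaI D.alphaI
  guard a := (D.guard a).lift

/-- The initial-node formula `⋀_{v ∈ V} v = v₀` of the constraint graph `CG(b)`. -/
def placeholderInit (V : Type) : Formula (V ⊕ V) :=
  fun γ => ∀ v, γ (Sum.inl v) = γ (Sum.inr v)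

/-- `final(b)`: the set of formulas `ψ` such that `(b_F, ψ)` is a node of `CG(b)`. -/
def DDS.finalFormulas {S A V : Type} (D : DDS S A V) (b bF : S) :
    Set (Formula (V ⊕ V)) :=
  {ψ | DDS.CGNode D.lift b (placeholderInit V) bF ψ}

/-- `blocked(b, φ)`: the formula (over the placeholder variables `V₀`, so represented as a
predicate on assignments to `V₀ ≅ V`) `φ[V₀/V] ∧ ¬(∃V. ⋁_{ψ ∈ final(b)} ψ)`. -/
def DDS.blocked {S A V : Type} (D : DDS S A V) (bF : S) (b : S) (φ : Formula V) :
    Formula V :=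
  fun α0 => φ α0 ∧
    ¬ ∃ (αv : Assign V) (ψ : Formula (V ⊕ V)),
        ψ ∈ D.finalFormulas b bF ∧ ψ (Sum.elim αv α0)

/-! ## Data Petri nets (DPN) -/

/-- A data Petri net `⟨P, T, F, ℓ, A, V, guard⟩` together with its initial marking `M_I`,
final marking `M_F` and initial assignment `α₀`.  The flow relation is split into its
place-to-transition and transition-to-place parts. -/
structure DPN (P T A V : Type) where
  flowPT : P → T → ℕ
  flowTP : T → P → ℕ
  lab : T → A
  guard : T → Guard V
  MI : P → ℕ
  MF : P → ℕ
  alpha0 : Assign V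

/-- A transition firing `(M, α) →(t,β) (M', α')` of a DPN. -/
def DPN.Firing {P T A V : Type} (N : DPN P T A V) (M : P → ℕ) (α : Assign V)
    (t : T) (β : TAssign V) (M' : P → ℕ) (α' : Assign V) : Prop :=
  (∀ v ∈ (N.guard t).reads, β.read v = α v) ∧
  (N.guard t).sat β ∧
  (∀ p, N.flowPT p t ≤ M p) ∧
  (∀ p, M' p = M p - N.flowPT p t + N.flowTP t p) ∧
  (∀ v ∈ (N.guard t).writes, α' v = β.write v) ∧
  (∀ v, v ∉ (N.guard t).writes → α' v = α v)

/-- `(M, α) →* (M', α')`: a sequence of transition firings of the DPN. -/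
inductive DPN.Reach {P T A V : Type} (N : DPN P T A V) :
    (P → ℕ) × Assign V → (P → ℕ) × Assign V → Prop
  | refl (c : (P → ℕ) × Assign V) : Reach N c c
  | step {c : (P → ℕ) × Assign V} {M M' : P → ℕ} {α α' : Assign V}
      {t : T} {β : TAssign V} :
      Reach N c (M, α) → N.Firing M α t β M' α' → Reach N c (M', α')

/-- The DPN is `k`-bounded. -/
def DPN.Bounded {P T A V : Type} (N : DPN P T A V) (k : ℕ) : Prop :=
  ∀ M α, N.Reach (N.MI, N.alpha0) (M, α) → ∀ p, M p ≤ k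

/-- Property (P1): every reachable state can be continued to a process run. -/
def DPN.P1 {P T A V : Type} (N : DPN P T A V) : Prop :=
  ∀ M α, N.Reach (N.MI, N.alpha0) (M, α) → ∃ α', N.Reach (M, α) (N.MF, α')

/-- Property (P2): termination is clean. -/
def DPN.P2 {P T A V : Type} (N : DPN P T A V) : Prop :=
  ∀ M α, N.Reach (N.MI, N.alpha0) (M, α) → (∀ p, N.MF p ≤ M p) → M = N.MF

/-- Property (P3): no dead transitions. -/
def DPN.P3 {P T A V : Type} (N : DPN P T A V) : Prop :=
  ∀ t : T, ∃ M α β M' α',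
    N.Reach (N.MI, N.alpha0) (M, α) ∧ N.Firing M α t β M' α'

/-- Data-aware soundness: (P1) ∧ (P2) ∧ (P3). -/
def DPN.Sound {P T A V : Type} (N : DPN P T A V) : Prop := N.P1 ∧ N.P2 ∧ N.P3

/-- `B = DPNtoDDS(N)` for a `k`-bounded DPN `N` with injective labelling: the states of `B`
are the `k`-bounded markings, initial state `M_I`, final states `{M_F}`, initial assignment
`α₀`, `guard'(ℓ(t)) = guard(t)`, and `(M, a, M') ∈ Δ` iff there is `t` with `ℓ(t) = a`,
`M(p) ≥ F(p,t)` and `M'(p) = M(p) − F(p,t) + F(t,p)` for all `p`. -/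
def IsDPNtoDDS {P T A V : Type} (N : DPN P T A V) (k : ℕ) (D : DDS (P → ℕ) A V) : Prop :=
  D.states = {M | ∀ p, M p ≤ k} ∧
  D.init = N.MI ∧
  D.finals = {N.MF} ∧
  D.alphaI = N.alpha0 ∧
  (∀ t, D.guard (N.lab t) = N.guard t) ∧
  ∀ M a M', (M, a, M') ∈ D.trans ↔
    ((∀ p, M p ≤ k) ∧ (∀ p, M' p ≤ k) ∧
      ∃ t, N.lab t = a ∧ (∀ p, N.flowPT p t ≤ M p) ∧
        (∀ p, M' p = M p - N.flowPT p t + N.flowTP t p))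

/-!
A configuration of `DPNtoDDS(N)` is just a state of `N` whose marking is `k`-bounded, and
a DDS step is exactly a firing of a transition with the same label. Since `N` is
`k`-bounded, every firing from a reachable state stays inside the bounded markings, so the
two systems have the same reachable configurations and the same derivations between them.
Hence a blocked configuration of the DDS is precisely a reachable state of `N` from which
`M_F` cannot be reached, i.e. a counterexample to (P1).
-/

theorem DPN.Reach.trans {P T A V : Type} {N : DPN P T A V} {c₁ c₂ c₃ : (P → ℕ) × Assign V}
    (h₁₂ : N.Reach c₁ c₂) (h₂₃ : N.Reach c₂ c₃) : N.Reach c₁ c₃ := by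
  induction h₂₃ with
  | refl => exact h₁₂
  | step _ hf ih => exact ih.step hf

namespace IsDPNtoDDS

variable {P T A V : Type} {N : DPN P T A V} {k : ℕ} {D : DDS (P → ℕ) A V}

theorem step_of_firing (hD : IsDPNtoDDS N k D) {M M' : P → ℕ} {α α' : Assign V} {t : T}
    {β : TAssign V} (hf : N.Firing M α t β M' α') (hM : ∀ p, M p ≤ k) (hM' : ∀ p, M' p ≤ k) :
    D.Step M α (N.lab t) ⟨α, β.write⟩ M' α' := by
  obtain ⟨-, -, -, -, hguard, htrans⟩ := hD
  obtain ⟨hread, hsat, henabled, hmarking, hwrite, hkeep⟩ := hf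
  refine ⟨(htrans M (N.lab t) M').mpr ⟨hM, hM', t, rfl, henabled, hmarking⟩, fun _ => rfl,
    ?_, ?_, ?_⟩ <;> rw [hguard t]
  · exact hwrite
  · exact hkeep
  -- the guard only sees the variables it reads, which agree with the current assignment
  · exact ((N.guard t).sat_congr ⟨α, β.write⟩ β (fun v hv => (hread v hv).symm)
      fun _ _ => rfl).mpr hsat

theorem exists_firing_of_step (hD : IsDPNtoDDS N k D) {M M' : P → ℕ} {α α' : Assign V} {a : A}
    {β : TAssign V} (hs : D.Step M α a β M' α') : ∃ t, N.lab t = a ∧ N.Firing M α t β M' α' := by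
  obtain ⟨-, -, -, -, hguard, htrans⟩ := hD
  obtain ⟨hmem, hread, hwrite, hkeep, hsat⟩ := hs
  obtain ⟨-, -, t, rfl, henabled, hmarking⟩ := (htrans M a M').mp hmem
  rw [hguard t] at hsat hwrite hkeep
  exact ⟨t, rfl, fun v _ => hread v, hsat, henabled, hmarking, hwrite, hkeep⟩

theorem dpnReach_of_reach (hD : IsDPNtoDDS N k D) {c c' : (P → ℕ) × Assign V}
    (h : D.Reach c c') : N.Reach c c' := by
  induction h with
  | refl => exact .refl _
  | step _ hs ih =>
    obtain ⟨t, -, hf⟩ := hD.exists_firing_of_step hs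
    exact ih.step hf

theorem reach_of_dpnReach (hD : IsDPNtoDDS N k D) (hbound : N.Bounded k)
    {c c' : (P → ℕ) × Assign V} (hc : N.Reach (N.MI, N.alpha0) c) (h : N.Reach c c') :
    D.Reach c c' := by
  induction h with
  | refl => exact .refl _
  | @step M M' α α' t β h hf ih =>
    have hreach : N.Reach (N.MI, N.alpha0) (M, α) := hc.trans h
    exact ih.step (hD.step_of_firing hf (hbound M α hreach) (hbound M' α' (hreach.step hf)))

theorem reach_init_iff (hD : IsDPNtoDDS N k D) (hbound : N.Bounded k)
    {c : (P → ℕ) × Assign V} : D.Reach (D.init, D.alphaI) c ↔ N.Reach (N.MI, N.alpha0) c := by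
  rw [hD.2.1, hD.2.2.2.1]
  exact ⟨hD.dpnReach_of_reach, hD.reach_of_dpnReach hbound (.refl _)⟩

theorem hasBlockedState_iff (hD : IsDPNtoDDS N k D) (hbound : N.Bounded k) :
    D.HasBlockedState ↔
      ∃ M α, N.Reach (N.MI, N.alpha0) (M, α) ∧ ¬ ∃ α', N.Reach (M, α) (N.MF, α') := by
  simp only [DDS.HasBlockedState, hD.2.2.1, hD.reach_init_iff hbound, Set.mem_singleton_iff,
    exists_and_left, exists_eq_left]
  refine exists₂_congr fun M α => and_congr_right fun hM => not_congr ?_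
  exact ⟨fun ⟨α', h⟩ => ⟨α', hD.dpnReach_of_reach h⟩,
    fun ⟨α', h⟩ => ⟨α', hD.reach_of_dpnReach hbound hM h⟩⟩

end IsDPNtoDDS

theorem dpn_P1_iff_no_blocked_state_general {P T A V : Type}
    (N : DPN P T A V) (k : ℕ) (D : DDS (P → ℕ) A V)
    (hbound : N.Bounded k)
    (hDDS : IsDPNtoDDS N k D) :
    N.P1 ↔ ¬ D.HasBlockedState := by
  rw [hDDS.hasBlockedState_iff hbound]
  simp only [DPN.P1, not_exists, not_and, not_forall, not_not]

/-- Let `N` be a `k`-bounded DPN with injective labelling `ℓ` and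
`B = DPNtoDDS(N)`.  Then `N` satisfies (P1) iff `B` has no blocked state. -/
theorem dpn_P1_iff_no_blocked_state {P T A V : Type}
    [Finite P] [Finite T] [Finite A] [Finite V]
    (N : DPN P T A V) (k : ℕ) (D : DDS (P → ℕ) A V)
    (hbound : N.Bounded k) (hinj : Function.Injective N.lab)
    (hDDS : IsDPNtoDDS N k D) :
    N.P1 ↔ ¬ D.HasBlockedState :=
  dpn_P1_iff_no_blocked_state_general N k D hbound hDDS
end

section
/- Let B be a DDS with constraint graph CG = CG(b_I, α_I). For every symbolic run σ ending in a state b and every assignment α to V: CG has a path π from the initial node (b_I, C_{α_I}) to some node (b, φ) with σ(π) = σ and α satisfying φ, if and only if B has a run (b_I, α_I) →* (b, α) whose abstraction is σ. -/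
/-! `update φ a` is exactly the set of assignments reachable by one `a`-step from an assignment
satisfying `φ`. Hence, by induction along the trace, the formula at the end of the constraint-graph
path labelled `σ` is satisfied precisely by the assignments reachable by derivations with
abstraction `σ` from assignments satisfying the initial formula; for `C_{α_I}` the only such
assignment is `α_I`. -/

namespace DDS

variable {S A V : Type} {D : DDS S A V}

/-- `β` agrees with `⟨α, α'⟩` on every read copy and on the written copies of written variables,
which is all the guard sees. -/
lemma Step.guard_sat {b b' : S} {α α' : Assign V} {a : A} {β : TAssign V}
    (h : D.Step b α a β b' α') : (D.guard a).sat ⟨α, α'⟩ := by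
  obtain ⟨-, hread, hwrite, -, hsat⟩ := h
  refine ((D.guard a).sat_congr β ⟨α, α'⟩ ?_ ?_).mp hsat
  · exact fun v _ => hread v
  · exact fun v hv => (hwrite v hv).symm

lemma update_of_step {φ : Formula V} {b b' : S} {α α' : Assign V} {a : A} {β : TAssign V}
    (h : D.Step b α a β b' α') (hφ : φ α) : D.update φ a α' :=
  ⟨α, hφ, h.guard_sat, h.2.2.2.1⟩

lemma exists_step_of_update {φ : Formula V} {b b' : S} {α' : Assign V} {a : A}
    (htr : (b, a, b') ∈ D.trans) (h : D.update φ a α') :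
    ∃ α, φ α ∧ D.Step b α a ⟨α, α'⟩ b' α' := by
  obtain ⟨α, hφ, hsat, hframe⟩ := h
  exact ⟨α, hφ, htr, fun _ => rfl, fun _ _ => rfl, hframe, hsat⟩

lemma CGPath.exists_deriv {b0 b : S} {φ0 φ : Formula V} {σ : List (A × S)}
    (hp : D.CGPath b0 φ0 b φ σ) {α : Assign V} (hα : φ α) :
    ∃ α0, φ0 α0 ∧ D.Deriv b0 α0 σ b α := by
  induction hp generalizing α with
  | refl => exact ⟨α, hα, .refl _ _⟩
  | step _ htr _ ih =>
    obtain ⟨α', hφ, hstep⟩ := exists_step_of_update htr hα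
    obtain ⟨α0, hα0, hd⟩ := ih hφ
    exact ⟨α0, hα0, hd.step hstep⟩

lemma Deriv.exists_cgPath {b0 b : S} {α0 α : Assign V} {σ : List (A × S)}
    (hd : D.Deriv b0 α0 σ b α) {φ0 : Formula V} (hα0 : φ0 α0) :
    ∃ φ, D.CGPath b0 φ0 b φ σ ∧ φ α := by
  induction hd with
  | refl => exact ⟨φ0, .refl, hα0⟩
  | step _ hstep ih =>
    obtain ⟨φ, hp, hφ⟩ := ih
    have hupd := update_of_step hstep hφ
    exact ⟨_, hp.step hstep.1 ⟨_, hupd⟩, hupd⟩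

end DDS

lemma cof_iff_eq {V : Type} {α α' : Assign V} : Cof α α' ↔ α' = α :=
  funext_iff.symm

theorem cg_path_iff_run_general {S A V : Type}
    (D : DDS S A V) (σ : List (A × S)) (b : S) (α : Assign V) :
    (∃ φ : Formula V, D.CGPath D.init (Cof D.alphaI) b φ σ ∧ φ α) ↔
      D.Deriv D.init D.alphaI σ b α := by
  constructor
  · rintro ⟨φ, hp, hφ⟩
    obtain ⟨α0, hα0, hd⟩ := hp.exists_deriv hφ
    rwa [cof_iff_eq.mp hα0] at hd
  · exact fun hd => hd.exists_cgPath (cof_iff_eq.mpr rfl)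

/-- Lemma 2(1).  For every symbolic run `σ` ending in a state `b` and
every assignment `α`: `CG` has a path `π` from the initial node `(b_I, C_{α_I})` to some
node `(b, φ)` with `σ(π) = σ` and `α ⊨ φ`, iff `B` has a run `(b_I, α_I) →* (b, α)`
whose abstraction is `σ`. -/
theorem cg_path_iff_run {S A V : Type} [Finite S] [Finite A] [Finite V]
    (D : DDS S A V) (σ : List (A × S)) (b : S) (α : Assign V)
    (hσ : D.SymDeriv D.init σ b) :
    (∃ φ : Formula V, D.CGPath D.init (Cof D.alphaI) b φ σ ∧ φ α) ↔
      D.Deriv D.init D.alphaI σ b α :=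
  cg_path_iff_run_general D σ b α
end

section
/- Let B be a DDS, b a state of B, and CG(b) the constraint graph starting at b with placeholder variables V_0. For every symbolic derivation σ starting at b and ending in a state b', and every assignment α to V ∪ V_0: CG(b) has a path π from its initial node to some node (b', φ) with σ(π) = σ and α satisfying φ, if and only if B has a derivation (b, α|_{V_0}) →* (b', α|_V) whose abstraction is σ. -/
/-- Forward direction: from a constraint-graph path to a derivation. -/
lemma cgb_path_to_deriv {S A V : Type} (D : DDS S A V) {b : S}
    {b' : S} {φ : Formula (V ⊕ V)} {σ : List (A × S)}
    (h : DDS.CGPath D.lift b (placeholderInit V) b' φ σ) :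
    ∀ α : Assign (V ⊕ V), φ α →
      D.Deriv b (fun v => α (Sum.inr v)) σ b' (fun v => α (Sum.inl v)) := by
  induction h with
  | refl =>
      intro α hα
      have hEq : (fun v => α (Sum.inr v)) = (fun v => α (Sum.inl v)) :=
        funext fun v => (hα v).symm
      rw [hEq]
      exact DDS.Deriv.refl _ _
  | @step bmid φmid σ0 a b2 hpath htrans hsat ih =>
      intro α hα
      obtain ⟨u, hu, hgsat, heq⟩ := hα
      have hur : (fun v => u (Sum.inr v)) = fun v => α (Sum.inr v) := by
        funext v
        refine (heq (Sum.inr v) ?_).symm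
        rintro ⟨w, -, hwe⟩
        cases hwe
      have hd := ih u hu
      rw [hur] at hd
      refine DDS.Deriv.step (β := ⟨fun v => u (Sum.inl v), fun v => α (Sum.inl v)⟩) hd ?_
      refine ⟨htrans, fun v => rfl, fun v _ => rfl, ?_, hgsat⟩
      intro v hv
      refine heq (Sum.inl v) ?_
      rintro ⟨w, hw, hwe⟩
      exact hv (Sum.inl.inj hwe ▸ hw)

/-- Backward direction: from a derivation to a constraint-graph path. -/
lemma deriv_to_cgb_path {S A V : Type} (D : DDS S A V) {b : S}
    {α0 : Assign V} {σ : List (A × S)} {b' : S} {α1 : Assign V}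
    (h : D.Deriv b α0 σ b' α1) :
    ∃ φ : Formula (V ⊕ V),
      DDS.CGPath D.lift b (placeholderInit V) b' φ σ ∧ φ (Sum.elim α1 α0) := by
  induction h with
  | refl => exact ⟨_, DDS.CGPath.refl, fun v => rfl⟩
  | @step σ0 bm αm a β b2 α2 hd hstep ih =>
      obtain ⟨φ, hpath, hφ⟩ := ih
      obtain ⟨htrans, hread, hwrite, hnw, hsat⟩ := hstep
      have hsat' : ((D.lift).guard a).sat ⟨Sum.elim αm α0, Sum.elim α2 α0⟩ := by
        refine ((D.guard a).sat_congr β ⟨αm, α2⟩ (fun v _ => hread v)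
          (fun v hv => (hwrite v hv).symm)).mp hsat
      have hmem : (D.lift).update φ a (Sum.elim α2 α0) := by
        refine ⟨Sum.elim αm α0, hφ, hsat', ?_⟩
        rintro (w | w) hv
        · exact hnw w (fun hw => hv ⟨w, hw, rfl⟩)
        · rfl
      exact ⟨_, DDS.CGPath.step hpath htrans ⟨_, hmem⟩, hmem⟩

/-- Lemma 2(2).  For every symbolic derivation `σ` from `b` to `b'` and
every assignment `α` to `V ∪ V₀`: the constraint graph `CG(b)` (with placeholder
variables `V₀`, here the second summand of `V ⊕ V`) has a path `π` from its initial node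
to some node `(b', φ)` with `σ(π) = σ` and `α ⊨ φ`, iff `B` has a derivation
`(b, α|_{V₀}) →* (b', α|_V)` whose abstraction is `σ`. -/
theorem cgb_path_iff_derivation {S A V : Type} [Finite S] [Finite A] [Finite V]
    (D : DDS S A V) (b : S) (σ : List (A × S)) (b' : S) (α : Assign (V ⊕ V))
    (hσ : D.SymDeriv b σ b') :
    (∃ φ : Formula (V ⊕ V),
        DDS.CGPath D.lift b (placeholderInit V) b' φ σ ∧ φ α) ↔
      D.Deriv b (fun v => α (Sum.inr v)) σ b' (fun v => α (Sum.inl v)) := by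
  constructor
  · rintro ⟨φ, hpath, hφ⟩
    exact cgb_path_to_deriv D hpath α hφ
  · intro hd
    obtain ⟨φ, hpath, hφ⟩ := deriv_to_cgb_path D hd
    have hα : Sum.elim (fun v => α (Sum.inl v)) (fun v => α (Sum.inr v)) = α :=
      funext fun x => by cases x <;> rfl
    rw [hα] at hφ
    exact ⟨φ, hpath, hφ⟩
end

section
/- Let N be a k-bounded data Petri net with injective labelling ℓ, B = DPNtoDDS(N), and CG the constraint graph of B. There exists a node (M, φ) of CG whose state M satisfies M ≥ M_F (pointwise), if and only if some state M of B with M ≥ M_F is reachable in B. -/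
/-! The formula of a constraint-graph node `(b, φ)` is the strongest postcondition of the
symbolic paths leading to `b`: its models are exactly the assignments `α` for which `(b, α)`
is reachable.  Hence a state carries a node of `CG` iff it is reachable in `B`, and a reachable
state of `DPNtoDDS(N)` is a `k`-bounded marking because the initial marking is reachable in
`N` and every transition of `B` ends in a `k`-bounded marking. -/

namespace DDS

variable {S A V : Type} {D : DDS S A V}

theorem Step.update_apply {b b' : S} {α α' : Assign V} {a : A} {β : TAssign V}
    {φ : Formula V} (hstep : D.Step b α a β b' α') (hφ : φ α) : D.update φ a α' := by
  obtain ⟨-, hread, hwrite, hframe, hsat⟩ := hstep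
  refine ⟨α, hφ, ?_, hframe⟩
  -- `β` agrees with `⟨α, α'⟩` on every annotated variable occurring in the guard.
  exact ((D.guard a).sat_congr β ⟨α, α'⟩ (fun v _ => hread v)
    (fun v hv => (hwrite v hv).symm)).mp hsat

theorem exists_step_of_update_apply {b b' : S} {α' : Assign V} {a : A} {φ : Formula V}
    (htrans : (b, a, b') ∈ D.trans) (hα' : D.update φ a α') :
    ∃ α, φ α ∧ D.Step b α a ⟨α, α'⟩ b' α' := by
  obtain ⟨α, hφ, hsat, hframe⟩ := hα'
  exact ⟨α, hφ, htrans, fun _ => rfl, fun _ _ => rfl, hframe, hsat⟩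

theorem CGNode.exists_reach_of_apply {b0 b : S} {φ0 φ : Formula V}
    (hnode : D.CGNode b0 φ0 b φ) {α : Assign V} (hα : φ α) :
    ∃ α0, φ0 α0 ∧ D.Reach (b0, α0) (b, α) := by
  induction hnode generalizing α with
  | init => exact ⟨α, hα, .refl _⟩
  | step _ htrans _ ih =>
    obtain ⟨u, hu, hstep⟩ := exists_step_of_update_apply htrans hα
    obtain ⟨α0, hα0, hreach⟩ := ih hu
    exact ⟨α0, hα0, .step hreach hstep⟩

theorem exists_cgNode_of_reach {b0 b : S} {φ0 : Formula V} {α0 α : Assign V}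
    (hα0 : φ0 α0) (hreach : D.Reach (b0, α0) (b, α)) :
    ∃ φ, D.CGNode b0 φ0 b φ ∧ φ α := by
  generalize hc : (b, α) = c at hreach
  induction hreach generalizing b α with
  | refl => cases hc; exact ⟨φ0, .init, hα0⟩
  | step _ hstep ih =>
    cases hc
    obtain ⟨φ, hnode, hφ⟩ := ih rfl
    have hupd := hstep.update_apply hφ
    exact ⟨_, .step hnode hstep.1 ⟨_, hupd⟩, hupd⟩

theorem CGNode.sat {b0 b : S} {φ0 φ : Formula V}
    (hnode : D.CGNode b0 φ0 b φ) (h0 : φ0.Sat) : φ.Sat := by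
  induction hnode with
  | init => exact h0
  | step _ _ hsat => exact hsat

variable (D) in
theorem exists_cgNode_iff_reachableState (b : S) :
    (∃ φ, D.CGNode D.init (Cof D.alphaI) b φ) ↔ D.ReachableState b := by
  constructor
  · rintro ⟨φ, hnode⟩
    obtain ⟨α, hα⟩ := hnode.sat ⟨D.alphaI, fun _ => rfl⟩
    obtain ⟨α0, hα0, hreach⟩ := hnode.exists_reach_of_apply hα
    obtain rfl : α0 = D.alphaI := funext hα0
    exact ⟨α, hreach⟩
  · rintro ⟨α, hreach⟩
    obtain ⟨φ, hnode, -⟩ := exists_cgNode_of_reach (φ0 := Cof D.alphaI) (fun _ => rfl) hreach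
    exact ⟨φ, hnode⟩

end DDS

theorem IsDPNtoDDS.mem_states_of_reachableState {P T A V : Type} {N : DPN P T A V} {k : ℕ}
    {D : DDS (P → ℕ) A V} (hbound : N.Bounded k) (hDDS : IsDPNtoDDS N k D)
    {M : P → ℕ} (hM : D.ReachableState M) : M ∈ D.states := by
  obtain ⟨hstates, hinit, -, -, -, htrans⟩ := hDDS
  obtain ⟨α, hreach⟩ := hM
  rw [hstates]
  generalize hc : (M, α) = c at hreach
  cases hreach with
  | refl =>
    cases hc
    rw [hinit]
    exact hbound N.MI N.alpha0 (.refl _)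
  | step _ hstep =>
    cases hc
    exact ((htrans _ _ _).mp hstep.1).2.1

theorem covering_node_iff_covering_reachable_general {P T A V : Type}
    (N : DPN P T A V) (k : ℕ) (D : DDS (P → ℕ) A V)
    (hbound : N.Bounded k)
    (hDDS : IsDPNtoDDS N k D) :
    (∃ (M : P → ℕ) (φ : Formula V),
        D.CGNode D.init (Cof D.alphaI) M φ ∧ ∀ p, N.MF p ≤ M p) ↔
      (∃ M : P → ℕ, M ∈ D.states ∧ (∀ p, N.MF p ≤ M p) ∧ D.ReachableState M) := by
  constructor
  · rintro ⟨M, φ, hnode, hcover⟩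
    have hM : D.ReachableState M := (D.exists_cgNode_iff_reachableState M).mp ⟨φ, hnode⟩
    exact ⟨M, hDDS.mem_states_of_reachableState hbound hM, hcover, hM⟩
  · rintro ⟨M, -, hcover, hM⟩
    obtain ⟨φ, hnode⟩ := (D.exists_cgNode_iff_reachableState M).mpr hM
    exact ⟨M, φ, hnode, hcover⟩

/-- Theorem 1(3).  Let `N` be a `k`-bounded DPN with injective
labelling, `B = DPNtoDDS(N)` and `CG` its constraint graph.  There exists a node `(M, φ)`
of `CG` with `M ≥ M_F` (pointwise), iff some state `M` of `B` with `M ≥ M_F` is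
reachable in `B`. -/
theorem covering_node_iff_covering_reachable {P T A V : Type}
    [Finite P] [Finite T] [Finite A] [Finite V]
    (N : DPN P T A V) (k : ℕ) (D : DDS (P → ℕ) A V)
    (hbound : N.Bounded k) (hinj : Function.Injective N.lab)
    (hDDS : IsDPNtoDDS N k D) :
    (∃ (M : P → ℕ) (φ : Formula V),
        D.CGNode D.init (Cof D.alphaI) M φ ∧ ∀ p, N.MF p ≤ M p) ↔
      (∃ M : P → ℕ, M ∈ D.states ∧ (∀ p, N.MF p ≤ M p) ∧ D.ReachableState M) :=
  covering_node_iff_covering_reachable_general N k D hbound hDDS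
end

section
/- Let N be a k-bounded data Petri net with injective labelling ℓ, B = DPNtoDDS(N), and CG the constraint graph of B. Then N is data-aware sound if and only if all three of the following hold: (i) no node (M, φ) of CG has M ≥ M_F and M ≠ M_F; (ii) for every transition t ∈ T of N, the label ℓ(t) labels some edge of CG; (iii) for every node (M, φ) of CG with M ≠ M_F, the formula blocked(M, φ) is unsatisfiable. -/
/-! ## Auxiliary lemmas -/

section AuxLemmas

variable {S A V : Type}

/-- Soundness of constraint-graph nodes: each satisfying assignment of a node formula
is reachable from an initial configuration satisfying `φ0`. -/
lemma DDS.node_sound (D : DDS S A V) {b0 : S} {φ0 : Formula V} {b : S} {φ : Formula V}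
    (h : D.CGNode b0 φ0 b φ) :
    ∀ α', φ α' → ∃ α0, φ0 α0 ∧ D.Reach (b0, α0) (b, α') := by
  induction h with
  | init => exact fun α' h => ⟨α', h, .refl _⟩
  | @step b φ a b' hn htr hsat ih =>
    rintro α'' ⟨u, hu, hgs, hfr⟩
    obtain ⟨α0, h0, hr⟩ := ih u hu
    exact ⟨α0, h0, .step hr (β := ⟨u, α''⟩)
      ⟨htr, fun v => rfl, fun v _ => rfl, hfr, hgs⟩⟩

/-- Completeness of constraint-graph nodes: each reachable configuration satisfies
some node formula. -/
lemma DDS.node_complete (D : DDS S A V) {b0 : S} {φ0 : Formula V} {α0 : Assign V}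
    (h0 : φ0 α0) {b : S} {α' : Assign V} (hr : D.Reach (b0, α0) (b, α')) :
    ∃ φ, D.CGNode b0 φ0 b φ ∧ φ α' := by
  have key : ∀ c c' : S × Assign V, D.Reach c c' → c = (b0, α0) →
      ∃ φ, D.CGNode b0 φ0 c'.1 φ ∧ φ c'.2 := by
    intro c c' h
    induction h with
    | refl => rintro rfl; exact ⟨φ0, .init, h0⟩
    | @step b b' α α' a β hr hs ih =>
      rintro rfl
      obtain ⟨φ, hn, hφ⟩ := ih rfl
      obtain ⟨htr, hrd, hwr, hfr, hgs⟩ := hs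
      have hupd : D.update φ a α' :=
        ⟨α, hφ,
          ((D.guard a).sat_congr β ⟨α, α'⟩ (fun v _ => hrd v)
            (fun v hv => (hwr v hv).symm)).mp hgs, hfr⟩
      exact ⟨D.update φ a, .step hn htr ⟨α', hupd⟩, hupd⟩
  exact key _ _ hr rfl

/-- Every node formula of the main constraint graph is satisfiable. -/
lemma DDS.node_sat (D : DDS S A V) {b0 : S} {αI : Assign V} {b : S} {φ : Formula V}
    (h : D.CGNode b0 (Cof αI) b φ) : Formula.Sat φ := by
  induction h with
  | init => exact ⟨αI, fun v => rfl⟩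
  | step _ _ hsat _ => exact hsat

/-- A step of `D` lifts to a step of the lifted DDS, keeping the placeholders fixed. -/
lemma DDS.lift_step_of (D : DDS S A V) {b : S} {α : Assign V} {a : A} {β : TAssign V}
    {b' : S} {α' : Assign V} (h : D.Step b α a β b' α') (α0 : Assign V) :
    D.lift.Step b (Sum.elim α α0) a ⟨Sum.elim β.read α0, Sum.elim β.write α0⟩ b'
      (Sum.elim α' α0) := by
  obtain ⟨htr, hrd, hwr, hfr, hgs⟩ := h
  refine ⟨htr, ?_, ?_, ?_, ?_⟩
  · rintro (v | v)
    · exact hrd v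
    · rfl
  · rintro w ⟨v, hv, rfl⟩
    exact hwr v hv
  · rintro (v | v) hw
    · exact hfr v (fun hv => hw ⟨v, hv, rfl⟩)
    · rfl
  · exact ((D.guard a).sat_congr β _ (fun v _ => rfl) (fun v _ => rfl)).mp hgs

/-- A step of the lifted DDS keeps the placeholders fixed and projects to a step of `D`. -/
lemma DDS.lift_step_proj (D : DDS S A V) {b : S} {γ : Assign (V ⊕ V)} {a : A}
    {β : TAssign (V ⊕ V)} {b' : S} {γ' : Assign (V ⊕ V)}
    (h : D.lift.Step b γ a β b' γ') :
    (∀ v, γ' (Sum.inr v) = γ (Sum.inr v)) ∧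
    D.Step b (fun v => γ (Sum.inl v)) a
      ⟨fun v => β.read (Sum.inl v), fun v => β.write (Sum.inl v)⟩ b'
      (fun v => γ' (Sum.inl v)) := by
  obtain ⟨htr, hrd, hwr, hfr, hgs⟩ := h
  constructor
  · intro v
    refine hfr (Sum.inr v) ?_
    rintro ⟨x, hx, hxe⟩
    cases hxe
  · refine ⟨htr, fun v => hrd _, ?_, ?_, hgs⟩
    · intro v hv
      exact hwr (Sum.inl v) ⟨v, hv, rfl⟩
    · intro v hv
      refine hfr (Sum.inl v) ?_
      rintro ⟨x, hx, hxe⟩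
      cases Sum.inl.inj hxe
      exact hv hx

/-- Reachability lifts, keeping the placeholders fixed. -/
lemma DDS.lift_reach_of (D : DDS S A V) {b : S} {α : Assign V} {b' : S} {α' : Assign V}
    (α0 : Assign V) (h : D.Reach (b, α) (b', α')) :
    D.lift.Reach (b, Sum.elim α α0) (b', Sum.elim α' α0) := by
  have key : ∀ c c' : S × Assign V, D.Reach c c' →
      D.lift.Reach (c.1, Sum.elim c.2 α0) (c'.1, Sum.elim c'.2 α0) := by
    intro c c' h
    induction h with
    | refl => exact .refl _
    | step hr hs ih => exact .step ih (D.lift_step_of hs α0)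
  exact key _ _ h

/-- Reachability in the lifted DDS keeps placeholders fixed and projects to `D`. -/
lemma DDS.lift_reach_proj (D : DDS S A V) :
    ∀ c c' : S × Assign (V ⊕ V), D.lift.Reach c c' →
      (∀ v, c'.2 (Sum.inr v) = c.2 (Sum.inr v)) ∧
      D.Reach (c.1, fun v => c.2 (Sum.inl v)) (c'.1, fun v => c'.2 (Sum.inl v)) := by
  intro c c' h
  induction h with
  | refl => exact ⟨fun v => rfl, .refl _⟩
  | step hr hs ih =>
    obtain ⟨h1, h2⟩ := D.lift_step_proj hs
    exact ⟨fun v => (h1 v).trans (ih.1 v), .step ih.2 h2⟩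

/-- The key semantic property of `final(b)`: a final formula is satisfied (with the
placeholders pinned to `α0`) iff a final configuration is reachable from `(b, α0)`. -/
lemma DDS.final_iff_reach (D : DDS S A V) (bF b : S) (α0 : Assign V) :
    (∃ (αv : Assign V) (ψ : Formula (V ⊕ V)),
        ψ ∈ D.finalFormulas b bF ∧ ψ (Sum.elim αv α0)) ↔
    ∃ αv, D.Reach (b, α0) (bF, αv) := by
  constructor
  · rintro ⟨αv, ψ, hψ, hsat⟩
    obtain ⟨γ0, hγ0, hr⟩ := D.lift.node_sound hψ _ hsat
    obtain ⟨h1, h2⟩ := D.lift_reach_proj _ _ hr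
    have hγα : (fun v => γ0 (Sum.inl v)) = α0 := by
      funext v
      rw [hγ0 v]
      exact (h1 v).symm
    rw [hγα] at h2
    exact ⟨αv, h2⟩
  · rintro ⟨αv, hr⟩
    have h0 : placeholderInit V (Sum.elim α0 α0) := fun v => rfl
    obtain ⟨ψ, hn, hψ⟩ := D.lift.node_complete h0 (D.lift_reach_of α0 hr)
    exact ⟨αv, ψ, hn, hψ⟩

end AuxLemmas

section DPNAux

variable {P T A V : Type}

lemma DPN.reach_trans (N : DPN P T A V) {c c' c'' : (P → ℕ) × Assign V}
    (h1 : N.Reach c c') (h2 : N.Reach c' c'') : N.Reach c c'' := by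
  induction h2 with
  | refl => exact h1
  | step hr hs ih => exact .step ih hs

lemma dds_step_firing {N : DPN P T A V} {k : ℕ} {D : DDS (P → ℕ) A V}
    (hDDS : IsDPNtoDDS N k D) {M : P → ℕ} {α : Assign V} {a : A} {β : TAssign V}
    {M' : P → ℕ} {α' : Assign V} (h : D.Step M α a β M' α') :
    ∃ t, N.lab t = a ∧ N.Firing M α t β M' α' := by
  obtain ⟨-, -, -, -, hg, htrIff⟩ := hDDS
  obtain ⟨htr, hrd, hwr, hfr, hgs⟩ := h
  obtain ⟨-, -, t, hlab, hflow, hM'⟩ := (htrIff M a M').mp htr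
  subst hlab
  rw [hg t] at hwr hfr hgs
  exact ⟨t, rfl, fun v _ => hrd v, hgs, hflow, hM', hwr, hfr⟩

lemma dds_reach_dpn {N : DPN P T A V} {k : ℕ} {D : DDS (P → ℕ) A V}
    (hDDS : IsDPNtoDDS N k D) :
    ∀ c c' : (P → ℕ) × Assign V, D.Reach c c' → N.Reach c c' := by
  intro c c' h
  induction h with
  | refl => exact .refl _
  | step hr hs ih =>
    obtain ⟨t, -, hf⟩ := dds_step_firing hDDS hs
    exact .step ih hf

lemma firing_dds_step {N : DPN P T A V} {k : ℕ} {D : DDS (P → ℕ) A V}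
    (hDDS : IsDPNtoDDS N k D) {M : P → ℕ} {α : Assign V} {t : T} {β : TAssign V}
    {M' : P → ℕ} {α' : Assign V} (hMk : ∀ p, M p ≤ k) (hM'k : ∀ p, M' p ≤ k)
    (h : N.Firing M α t β M' α') :
    D.Step M α (N.lab t) ⟨α, β.write⟩ M' α' := by
  obtain ⟨-, -, -, -, hg, htrIff⟩ := hDDS
  obtain ⟨hrd, hgs, hflow, hMeq, hwr, hfr⟩ := h
  refine ⟨(htrIff M (N.lab t) M').mpr ⟨hMk, hM'k, t, rfl, hflow, hMeq⟩,
    fun v => rfl, ?_, ?_, ?_⟩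
  · rw [hg t]; exact hwr
  · rw [hg t]; exact hfr
  · rw [hg t]
    exact ((N.guard t).sat_congr β ⟨α, β.write⟩ hrd (fun v _ => rfl)).mp hgs

lemma dpn_reach_dds {N : DPN P T A V} {k : ℕ} {D : DDS (P → ℕ) A V}
    (hDDS : IsDPNtoDDS N k D) (hbound : N.Bounded k) {c0 : (P → ℕ) × Assign V}
    (h0 : N.Reach (N.MI, N.alpha0) c0) :
    ∀ c, N.Reach c0 c → D.Reach c0 c := by
  intro c h
  induction h with
  | refl => exact .refl _
  | @step M M' α α' t β hr hf ih =>
    have hMk : ∀ p, M p ≤ k := hbound M α (N.reach_trans h0 hr)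
    have hM'k : ∀ p, M' p ≤ k := hbound M' α' (N.reach_trans h0 (.step hr hf))
    exact .step ih (firing_dds_step hDDS hMk hM'k hf)

end DPNAux

/-- Let `N` be a `k`-bounded DPN with injective labelling,
`B = DPNtoDDS(N)` and `CG` its constraint graph.  Then `N` is data-aware sound iff
(i) no node `(M, φ)` of `CG` has `M ≥ M_F` and `M ≠ M_F`; (ii) for every transition `t`
of `N` the label `ℓ(t)` labels some edge of `CG`; and (iii) for every node `(M, φ)` of
`CG` with `M ≠ M_F`, the formula `blocked(M, φ)` is unsatisfiable. -/
theorem dpn_sound_iff_cg_checks {P T A V : Type}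
    [Finite P] [Finite T] [Finite A] [Finite V]
    (N : DPN P T A V) (k : ℕ) (D : DDS (P → ℕ) A V)
    (hbound : N.Bounded k) (hinj : Function.Injective N.lab)
    (hDDS : IsDPNtoDDS N k D) :
    N.Sound ↔
      ((¬ ∃ (M : P → ℕ) (φ : Formula V), D.CGNode D.init (Cof D.alphaI) M φ ∧
          (∀ p, N.MF p ≤ M p) ∧ M ≠ N.MF) ∧
       (∀ t : T, ∃ (M : P → ℕ) (φ : Formula V) (M' : P → ℕ) (φ' : Formula V),
          D.CGEdge D.init (Cof D.alphaI) M φ (N.lab t) M' φ') ∧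
       (∀ (M : P → ℕ) (φ : Formula V), D.CGNode D.init (Cof D.alphaI) M φ →
          M ≠ N.MF → ¬ Formula.Sat (D.blocked N.MF M φ))) := by
  obtain ⟨hst, hinit, hfin, hαI, hg, htrIff⟩ := hDDS
  have hDDS' : IsDPNtoDDS N k D := ⟨hst, hinit, hfin, hαI, hg, htrIff⟩
  have hreach_dd : ∀ M α, N.Reach (N.MI, N.alpha0) (M, α) →
      D.Reach (D.init, D.alphaI) (M, α) := by
    intro M α h
    rw [hinit, hαI]
    exact dpn_reach_dds hDDS' hbound (.refl _) _ h
  have hdd_reach : ∀ M α, D.Reach (D.init, D.alphaI) (M, α) →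
      N.Reach (N.MI, N.alpha0) (M, α) := by
    intro M α h
    rw [hinit, hαI] at h
    exact dds_reach_dpn hDDS' _ _ h
  constructor
  · rintro ⟨hP1, hP2, hP3⟩
    refine ⟨?_, ?_, ?_⟩
    · rintro ⟨M, φ, hnode, hge, hne⟩
      obtain ⟨α, hφ⟩ := D.node_sat hnode
      obtain ⟨α0, hC, hr⟩ := D.node_sound hnode α hφ
      have hα0 : α0 = D.alphaI := funext hC
      subst hα0
      exact hne (hP2 M α (hdd_reach M α hr) hge)
    · intro t
      obtain ⟨M, α, β, M', α', hr, hf⟩ := hP3 t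
      obtain ⟨φ, hnode, hφ⟩ := D.node_complete (φ0 := Cof D.alphaI) (fun v => rfl) (hreach_dd M α hr)
      have hMk : ∀ p, M p ≤ k := hbound M α hr
      have hM'k : ∀ p, M' p ≤ k := hbound M' α' (.step hr hf)
      obtain ⟨hrd, hgs, hflow, hMeq, hwr, hfr⟩ := hf
      have htrans : (M, N.lab t, M') ∈ D.trans :=
        (htrIff M (N.lab t) M').mpr ⟨hMk, hM'k, t, rfl, hflow, hMeq⟩
      have hsat : Formula.Sat (D.update φ (N.lab t)) := by
        refine ⟨α', α, hφ, ?_, ?_⟩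
        · rw [hg t]
          exact ((N.guard t).sat_congr β ⟨α, α'⟩ hrd
            (fun v hv => (hwr v hv).symm)).mp hgs
        · rw [hg t]; exact hfr
      exact ⟨M, φ, M', D.update φ (N.lab t), hnode, htrans, hsat, rfl⟩
    · rintro M φ hnode hne ⟨α0, hφ, hnofin⟩
      obtain ⟨a0, hC, hr⟩ := D.node_sound hnode α0 hφ
      have ha0 : a0 = D.alphaI := funext hC
      subst ha0
      have hN : N.Reach (N.MI, N.alpha0) (M, α0) := hdd_reach M α0 hr
      obtain ⟨α', hr'⟩ := hP1 M α0 hN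
      have hrD : D.Reach (M, α0) (N.MF, α') :=
        dpn_reach_dds hDDS' hbound hN _ hr'
      exact hnofin ((D.final_iff_reach N.MF M α0).mpr ⟨α', hrD⟩)
  · rintro ⟨h1, h2, h3⟩
    refine ⟨?_, ?_, ?_⟩
    · intro M α hr
      by_cases hM : M = N.MF
      · subst hM; exact ⟨α, .refl _⟩
      obtain ⟨φ, hnode, hφ⟩ := D.node_complete (φ0 := Cof D.alphaI) (fun v => rfl) (hreach_dd M α hr)
      have hex : ∃ (αv : Assign V) (ψ : Formula (V ⊕ V)),
          ψ ∈ D.finalFormulas M N.MF ∧ ψ (Sum.elim αv α) := by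
        by_contra hno
        exact h3 M φ hnode hM ⟨α, hφ, hno⟩
      obtain ⟨αv, hrf⟩ := (D.final_iff_reach N.MF M α).mp hex
      exact ⟨αv, dds_reach_dpn hDDS' _ _ hrf⟩
    · intro M α hr hge
      by_contra hne
      obtain ⟨φ, hnode, -⟩ := D.node_complete (φ0 := Cof D.alphaI) (fun v => rfl) (hreach_dd M α hr)
      exact h1 ⟨M, φ, hnode, hge, hne⟩
    · intro t
      obtain ⟨M, φ, M', φ', hnode, htrans, hsat, hφ'⟩ := h2 t
      obtain ⟨α', u, hu, hgs, hfr⟩ := hsat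
      obtain ⟨a0, hC, hrD⟩ := D.node_sound hnode u hu
      have ha0 : a0 = D.alphaI := funext hC
      subst ha0
      have hN : N.Reach (N.MI, N.alpha0) (M, u) := hdd_reach M u hrD
      obtain ⟨-, -, t', hlab, hflow, hMeq⟩ := (htrIff M (N.lab t) M').mp htrans
      have htt : t' = t := hinj hlab
      subst htt
      rw [hg t'] at hgs hfr
      exact ⟨M, u, ⟨u, α'⟩, M', α', hN, fun v _ => rfl, hgs, hflow, hMeq,
        fun v _ => rfl, hfr⟩
end

section
/- Let B be a DDS with a single final state b_F (B_F = {b_F}) and b a state of B. For every assignment α to V: there exist α' and a derivation (b, α) →* (b_F, α') if and only if there exist a formula ψ ∈ final(b) and an assignment α'' to V ∪ V_0 with α''(v_0) = α(v) for all v ∈ V such that α'' satisfies ψ. -/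
lemma dds_reach_to_node {S A V : Type} (D : DDS S A V) (b : S) (α : Assign V) :
    ∀ c' : S × Assign V, D.Reach (b, α) c' →
      ∃ ψ, DDS.CGNode D.lift b (placeholderInit V) c'.1 ψ ∧ ψ (Sum.elim c'.2 α) := by
  intro c' h
  induction h with
  | refl =>
      exact ⟨placeholderInit V, DDS.CGNode.init, fun v => rfl⟩
  | @step b1 b2 α1 α2 a β hr hstep ih =>
      obtain ⟨ψ, hnode, hsat⟩ := ih
      obtain ⟨htrans, hread, hwrite, hkeep, hguard⟩ := hstep
      have hupd : (D.lift.update ψ a) (Sum.elim α2 α) := by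
        refine ⟨Sum.elim α1 α, hsat, ?_, ?_⟩
        · show (D.guard a).sat ⟨fun v => α1 v, fun v => α2 v⟩
          refine ((D.guard a).sat_congr β _ ?_ ?_).mp hguard
          · intro v _; exact (hread v)
          · intro v hv; exact (hwrite v hv).symm
        · rintro (v | v) hv
          · exact hkeep v (fun h => hv ⟨v, h, rfl⟩)
          · rfl
      exact ⟨D.lift.update ψ a, hnode.step htrans ⟨_, hupd⟩, hupd⟩

lemma dds_node_to_reach {S A V : Type} (D : DDS S A V) (b : S) (α : Assign V) :
    ∀ b' (ψ : Formula (V ⊕ V)), DDS.CGNode D.lift b (placeholderInit V) b' ψ →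
      ∀ α'' : Assign (V ⊕ V), (∀ v, α'' (Sum.inr v) = α v) → ψ α'' →
      D.Reach (b, α) (b', fun v => α'' (Sum.inl v)) := by
  intro b' ψ hnode
  induction hnode with
  | init =>
      intro α'' h0 hψ
      have : (fun v => α'' (Sum.inl v)) = α := by
        funext v; rw [hψ v, h0 v]
      rw [this]; exact DDS.Reach.refl _
  | @step b1 φ a b2 htrans hmem _ ih =>
      intro α'' h0 hψ
      obtain ⟨u, hu, hguard, hkeep⟩ := hψ
      have h0u : ∀ v, u (Sum.inr v) = α v := by
        intro v
        rw [← hkeep (Sum.inr v) (by rintro ⟨w, _, h⟩; cases h), h0 v]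
      have hreach := ih u h0u hu
      refine hreach.step (a := a) (β := ⟨fun v => u (Sum.inl v), fun v => α'' (Sum.inl v)⟩)
        ⟨hmem, fun v => rfl, fun v _ => rfl, ?_, hguard⟩
      intro v hv
      refine hkeep (Sum.inl v) ?_
      rintro ⟨w, hw, he⟩
      cases he; exact hv hw

/-- Let `B` be a DDS with a single final state `b_F` and `b` a state of
`B`.  For every assignment `α` to `V`: there is a derivation `(b, α) →* (b_F, α')` for
some `α'` iff there are a formula `ψ ∈ final(b)` and an assignment `α''` to `V ∪ V₀` with
`α''(v₀) = α(v)` for all `v ∈ V` such that `α'' ⊨ ψ`. -/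
theorem reach_final_iff_final_formula {S A V : Type} [Finite S] [Finite A] [Finite V]
    (D : DDS S A V) (bF : S) (hF : D.finals = {bF}) (b : S) (α : Assign V) :
    (∃ α' : Assign V, D.Reach (b, α) (bF, α')) ↔
      ∃ ψ ∈ D.finalFormulas b bF, ∃ α'' : Assign (V ⊕ V),
        (∀ v, α'' (Sum.inr v) = α v) ∧ ψ α'' := by
  constructor
  · rintro ⟨α', h⟩
    obtain ⟨ψ, hnode, hsat⟩ := dds_reach_to_node D b α (bF, α') h
    exact ⟨ψ, hnode, Sum.elim α' α, fun v => rfl, hsat⟩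
  · rintro ⟨ψ, hψ, α'', h0, hsat⟩
    exact ⟨_, dds_node_to_reach D b α bF ψ hψ α'' h0 hsat⟩
end
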